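/- For every f ∈ A_LP one has C₂ ≤ L(f), where L(f) := r(f)/2 + (4/r(f)) ∫₀^{r(f)/2} f(x) x dx + 2 ∫_{r(f)/2}^{r(f)} f(x) dx; indeed the function g(x) := f̂(2x/r(f)) belongs to A₂, satisfies g(0) = 1 and ρ₂(g) = L(f). -/

import Mathlib

open MeasureTheory Filter
open scoped Classical

noncomputable section

/-- The Fourier transform `ĝ(α) = ∫ g(x) e^{-2πiαx} dx` of a real-valued function. -/
def fourierT (g : ℝ → ℝ) (α : ℝ) : ℂ :=
  ∫ x : ℝ, (g x : ℂ) * Complex.exp (-(2 * Real.pi * α * x : ℝ) * Complex.I)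

/-- The class `A₂` of continuous, even, non-negative functions `g ∈ L¹(ℝ)`
with `ĝ(α) ≤ 0` for `|α| ≥ 2`. -/
def memA2 (g : ℝ → ℝ) : Prop :=
  Continuous g ∧ (∀ x, g (-x) = g x) ∧ (∀ x, 0 ≤ g x) ∧ MeasureTheory.Integrable g ∧
    ∀ α : ℝ, 2 ≤ |α| → (fourierT g α).re ≤ 0

/-- The functional `ρ₂(g) = ĝ(0) + ∫_{-1}^{1} ĝ(α)|α| dα + ∫_{1≤|α|≤2} ĝ(α) dα`. -/
def rho2 (g : ℝ → ℝ) : ℝ :=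
  (fourierT g 0).re + (∫ α in (-1 : ℝ)..1, (fourierT g α).re * |α|) +
    ∫ α in {α : ℝ | 1 ≤ |α| ∧ |α| ≤ 2}, (fourierT g α).re

/-- The constant `C₂ = inf ρ₂(g)/g(0)` over nonzero `g ∈ A₂` with `g(0) > 0`. -/
def C2 : ℝ :=
  sInf {c : ℝ | ∃ g : ℝ → ℝ, memA2 g ∧ g ≠ 0 ∧ 0 < g 0 ∧ c = rho2 g / g 0}

/-- The Cohn–Elkies linear programming class `A_LP`: even continuous `f ∈ L¹(ℝ)` with
`f(0) = f̂(0) = 1`, `f̂ ≥ 0`, and `f` eventually non-positive. -/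
def memALP (f : ℝ → ℝ) : Prop :=
  Continuous f ∧ (∀ x, f (-x) = f x) ∧ MeasureTheory.Integrable f ∧
    f 0 = 1 ∧ fourierT f 0 = 1 ∧ (∀ α : ℝ, 0 ≤ (fourierT f α).re) ∧
    ∃ r : ℝ, ∀ x : ℝ, r ≤ |x| → f x ≤ 0

/-- The last sign change `r(f) = inf{r > 0 : f(x) ≤ 0 for all |x| ≥ r}`. -/
def lastSign (f : ℝ → ℝ) : ℝ :=
  sInf {r : ℝ | 0 < r ∧ ∀ x : ℝ, r ≤ |x| → f x ≤ 0}

/-- The functional `L(f) = r(f)/2 + (4/r(f)) ∫₀^{r(f)/2} f(x) x dx + 2 ∫_{r(f)/2}^{r(f)} f(x) dx`. -/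
def Lfun (f : ℝ → ℝ) : ℝ :=
  lastSign f / 2 + (4 / lastSign f) * (∫ x in (0 : ℝ)..(lastSign f / 2), f x * x) +
    2 * ∫ x in (lastSign f / 2)..(lastSign f), f x

/-!
Because `f̂ ≥ 0` and `f` is continuous at `0`, integrating `f̂` against ever wider Gaussians and
applying Fatou's lemma shows `f̂ ∈ L¹`, so Fourier inversion applies. It gives `ĝ(α) = s f(sα)`
for `g(x) = f̂(x/s)` with `s = r(f)/2`: thus `ĝ ≤ 0` for `|α| ≥ 2` because `f ≤ 0` beyond `r(f)`,
and `ρ₂(g) = L(f)` after the substitution `x = sα`. Inversion also gives `|f| ≤ f(0) = 1`,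
whence, as `f ≤ 0` beyond `r(f)`, `L(f) ≥ ∫ f = 1`.
-/

open Complex Real
open scoped FourierTransform RealInnerProductSpace Topology

section GaussianApproximation

variable {V E : Type*} [NormedAddCommGroup V] [InnerProductSpace ℝ V] [FiniteDimensional ℝ V]
  [MeasurableSpace V] [BorelSpace V] [NormedAddCommGroup E] [NormedSpace ℂ E] [CompleteSpace E]

-- `Real.tendsto_integral_gaussian_smul` at `v = 0`, without assuming `𝓕 f` integrable.
lemma tendsto_integral_gaussian_smul_fourier {f : V → E} (hf : Integrable f)
    (h'f : ContinuousAt f 0) :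
    Tendsto (fun c : ℝ ↦ ∫ w : V, cexp (-c⁻¹ * ‖w‖ ^ 2) • 𝓕 f w) atTop (𝓝 (f 0)) := by
  refine (Real.tendsto_integral_gaussian_smul' hf h'f).congr' ?_
  filter_upwards [Ioi_mem_atTop 0] with c (hc : 0 < c)
  have hJ : Integrable (fun w : V ↦ cexp (-c⁻¹ * ‖w‖ ^ 2 + 2 * π * I * ⟪(0 : V), w⟫)) :=
    GaussianFourier.integrable_cexp_neg_mul_sq_norm_add (by simpa) _ _
  have hflip : ∫ w : V, cexp (-c⁻¹ * ‖w‖ ^ 2) • 𝓕 f w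
      = ∫ w : V, 𝓕 (fun w : V ↦ cexp (-c⁻¹ * ‖w‖ ^ 2 + 2 * π * I * ⟪(0 : V), w⟫)) w • f w := by
    simpa using! (VectorFourier.integral_fourierIntegral_smul_eq_flip (L := innerₗ V)
      Real.continuous_fourierChar continuous_inner hJ hf).symm
  rw [hflip]
  congr with w
  rw [fourier_gaussian_innerProductSpace' (by simpa), ofReal_inv, div_inv_eq_mul, div_inv_eq_mul]
  ring_nf

end GaussianApproximation

lemma integrable_of_tendsto_integral_gaussian_mul {F : ℝ → ℝ} (hF : Continuous F)
    (hnn : ∀ w, 0 ≤ F w) (hbdd : BddAbove (Set.range F)) {l : ℝ}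
    (hl : Tendsto (fun c : ℝ ↦ ∫ w, rexp (-c⁻¹ * w ^ 2) * F w) atTop (𝓝 l)) :
    Integrable F := by
  obtain ⟨C, hC⟩ := hbdd
  have hbound : ∀ w, ‖F w‖ ≤ C := fun w ↦ (norm_of_nonneg (hnn w)).trans_le (hC ⟨w, rfl⟩)
  have hint : ∀ c : ℝ, 0 < c → Integrable fun w ↦ rexp (-c⁻¹ * w ^ 2) * F w := fun c hc ↦ by
    simpa only [mul_comm] using (integrable_exp_neg_mul_sq (inv_pos.2 hc)).bdd_mul
      hF.aestronglyMeasurable (ae_of_all _ hbound)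
  have hpt : ∀ w, Tendsto (fun c : ℝ ↦ ENNReal.ofReal (rexp (-c⁻¹ * w ^ 2) * F w)) atTop
      (𝓝 (ENNReal.ofReal (F w))) := fun w ↦ by
    have : Tendsto (fun c : ℝ ↦ rexp (-c⁻¹ * w ^ 2) * F w) atTop (𝓝 (rexp (-0 * w ^ 2) * F w)) :=
      ((tendsto_inv_atTop_zero.neg.mul_const _).rexp).mul_const _
    simpa [Function.comp_def] using (ENNReal.continuous_ofReal.tendsto _).comp this
  have hlim : Tendsto (fun c : ℝ ↦ ∫⁻ w, ENNReal.ofReal (rexp (-c⁻¹ * w ^ 2) * F w)) atTop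
      (𝓝 (ENNReal.ofReal l)) := by
    refine ((ENNReal.continuous_ofReal.tendsto _).comp hl).congr' ?_
    filter_upwards [Ioi_mem_atTop 0] with c (hc : 0 < c)
    exact ofReal_integral_eq_lintegral_ofReal (hint c hc)
      (ae_of_all _ fun w ↦ mul_nonneg (exp_nonneg _) (hnn w))
  have fatou : ∫⁻ w, ENNReal.ofReal (F w) ≤ ENNReal.ofReal l := by
    calc ∫⁻ w, ENNReal.ofReal (F w)
        = ∫⁻ w, liminf (fun c : ℝ ↦ ENNReal.ofReal (rexp (-c⁻¹ * w ^ 2) * F w)) atTop := by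
          simp_rw [(hpt _).liminf_eq]
      _ ≤ liminf (fun c : ℝ ↦ ∫⁻ w, ENNReal.ofReal (rexp (-c⁻¹ * w ^ 2) * F w)) atTop :=
          lintegral_liminf_le' fun c ↦ (by fun_prop : Measurable _).aemeasurable
      _ = ENNReal.ofReal l := hlim.liminf_eq
  exact ⟨hF.aestronglyMeasurable, (hasFiniteIntegral_iff_ofReal (ae_of_all _ hnn)).2
    (fatou.trans_lt ENNReal.ofReal_lt_top)⟩

section FourierT

variable {g : ℝ → ℝ}

lemma fourierT_eq_fourier (g : ℝ → ℝ) (α : ℝ) :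
    fourierT g α = 𝓕 (fun x : ℝ ↦ (g x : ℂ)) α := by
  rw [Real.fourier_real_eq_integral_exp_smul, fourierT]
  congr with x
  rw [smul_eq_mul, mul_comm]
  push_cast
  ring_nf

lemma fourierT_zero (g : ℝ → ℝ) : fourierT g 0 = ((∫ x, g x : ℝ) : ℂ) := by
  simp only [fourierT, ofReal_zero, mul_zero, zero_mul, neg_zero, Complex.exp_zero, mul_one]
  exact integral_ofReal

lemma norm_fourierT_le (g : ℝ → ℝ) (α : ℝ) : ‖fourierT g α‖ ≤ ∫ x, |g x| := by
  rw [fourierT_eq_fourier]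
  exact (VectorFourier.norm_fourierIntegral_le_integral_norm _ _ _ _ α).trans_eq
    (by simp only [norm_real, Real.norm_eq_abs])

lemma continuous_re_fourierT (hi : Integrable g) : Continuous fun α ↦ (fourierT g α).re := by
  simp_rw [fourierT_eq_fourier]
  exact continuous_re.comp (VectorFourier.fourierIntegral_continuous Real.continuous_fourierChar
    continuous_inner hi.ofReal)

lemma fourierT_neg_of_even (he : ∀ x, g (-x) = g x) (α : ℝ) :
    fourierT g (-α) = fourierT g α := by
  rw [fourierT, ← integral_neg_eq_self]
  congr with x
  rw [he]
  push_cast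
  ring_nf

lemma ofReal_re_fourierT_of_even (he : ∀ x, g (-x) = g x) (α : ℝ) :
    ((fourierT g α).re : ℂ) = fourierT g α := by
  refine conj_eq_iff_re.mp ?_
  rw [fourierT, ← integral_conj, ← integral_neg_eq_self]
  congr with x
  rw [he, map_mul, ← exp_conj, conj_ofReal]
  simp only [map_mul, map_neg, conj_ofReal, conj_I]
  push_cast
  ring_nf

end FourierT

section NonnegFourier

variable {g : ℝ → ℝ}

lemma tendsto_integral_gaussian_mul_re_fourierT (he : ∀ x, g (-x) = g x) (hi : Integrable g)
    (hg0 : ContinuousAt g 0) :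
    Tendsto (fun c : ℝ ↦ ∫ w, rexp (-c⁻¹ * w ^ 2) * (fourierT g w).re) atTop (𝓝 (g 0)) := by
  have h := tendsto_integral_gaussian_smul_fourier (f := fun x ↦ (g x : ℂ)) hi.ofReal
    (continuous_ofReal.continuousAt.comp hg0)
  have hre : (fun c : ℝ ↦ ∫ w, cexp (-c⁻¹ * ‖w‖ ^ 2) • 𝓕 (fun x ↦ (g x : ℂ)) w)
      = fun c ↦ ((∫ w, rexp (-c⁻¹ * w ^ 2) * (fourierT g w).re : ℝ) : ℂ) := by
    funext c
    rw [← integral_complex_ofReal]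
    congr with w
    rw [smul_eq_mul, ofReal_mul, ofReal_re_fourierT_of_even he, fourierT_eq_fourier,
      Real.norm_eq_abs, ← ofReal_pow, sq_abs]
    push_cast
    rfl
  rw [hre] at h
  simpa [Function.comp_def] using (continuous_re.tendsto _).comp h

lemma integrable_re_fourierT (hc : Continuous g) (he : ∀ x, g (-x) = g x) (hi : Integrable g)
    (hnn : ∀ α, 0 ≤ (fourierT g α).re) :
    Integrable fun α ↦ (fourierT g α).re :=
  integrable_of_tendsto_integral_gaussian_mul (continuous_re_fourierT hi) hnn
    ⟨∫ x, |g x|, by rintro _ ⟨α, rfl⟩; exact (re_le_norm _).trans (norm_fourierT_le g α)⟩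
    (tendsto_integral_gaussian_mul_re_fourierT he hi hc.continuousAt)

lemma fourierT_re_fourierT (hc : Continuous g) (he : ∀ x, g (-x) = g x) (hi : Integrable g)
    (hF : Integrable fun α ↦ (fourierT g α).re) (v : ℝ) :
    fourierT (fun α ↦ (fourierT g α).re) v = g v := by
  set gc : ℝ → ℂ := fun x ↦ (g x : ℂ)
  have hFc : 𝓕 gc = fun α ↦ ((fourierT g α).re : ℂ) := by
    funext α
    rw [← fourierT_eq_fourier, ofReal_re_fourierT_of_even he]
  have hinv : 𝓕⁻ (𝓕 gc) (-v) = gc (-v) :=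
    hi.ofReal.fourierInv_fourier_eq (hFc ▸ hF.ofReal) (continuous_ofReal.comp hc).continuousAt
  calc fourierT (fun α ↦ (fourierT g α).re) v
      = 𝓕 (𝓕 gc) v := by rw [fourierT_eq_fourier, hFc]
    _ = 𝓕⁻ (𝓕 gc) (-v) := by rw [Real.fourierInv_eq_fourier_neg, neg_neg]
    _ = g v := by rw [hinv]; exact congrArg ofReal (he v)

lemma abs_le_of_re_fourierT_nonneg (hc : Continuous g) (he : ∀ x, g (-x) = g x)
    (hi : Integrable g) (hnn : ∀ α, 0 ≤ (fourierT g α).re) (x : ℝ) : |g x| ≤ g 0 := by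
  have hF := integrable_re_fourierT hc he hi hnn
  have hinv := fourierT_re_fourierT hc he hi hF
  calc |g x| = ‖fourierT (fun α ↦ (fourierT g α).re) x‖ := by rw [hinv, norm_real, norm_eq_abs]
    _ ≤ ∫ α, |(fourierT g α).re| := norm_fourierT_le _ x
    _ = g 0 := by
      simp_rw [abs_of_nonneg (hnn _)]
      exact_mod_cast (fourierT_zero _).symm.trans (hinv 0)

end NonnegFourier

lemma fourierT_comp_mul_left (F : ℝ → ℝ) {a : ℝ} (ha : a ≠ 0) (α : ℝ) :
    fourierT (fun x ↦ F (a * x)) α = |a⁻¹| • fourierT F (α / a) := by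
  have hfun : (fun x : ℝ ↦ (F (a * x) : ℂ) * cexp (-(2 * π * α * x : ℝ) * I)) =
      fun x ↦ (fun y : ℝ ↦ (F y : ℂ) * cexp (-(2 * π * (α / a) * y : ℝ) * I)) (a * x) := by
    funext x
    congr 4
    field_simp
  rw [fourierT, hfun, Measure.integral_comp_mul_left
    (fun y : ℝ ↦ (F y : ℂ) * cexp (-(2 * π * (α / a) * y : ℝ) * I)) a, fourierT]

lemma fourierT_re_fourierT_div {g : ℝ → ℝ} (hc : Continuous g) (he : ∀ x, g (-x) = g x)
    (hi : Integrable g) (hF : Integrable fun α ↦ (fourierT g α).re) {s : ℝ} (hs : 0 < s)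
    (α : ℝ) : fourierT (fun x ↦ (fourierT g (x / s)).re) α = ((s * g (s * α) : ℝ) : ℂ) := by
  simp_rw [div_eq_inv_mul]
  rw [fourierT_comp_mul_left (fun α ↦ (fourierT g α).re) (inv_ne_zero hs.ne'),
    fourierT_re_fourierT hc he hi hF, inv_inv, abs_of_pos hs, div_eq_inv_mul, inv_inv,
    real_smul, ofReal_mul]

section EvenIntegrals

variable {h : ℝ → ℝ}

lemma intervalIntegral_neg_eq_two_mul_of_even (hc : Continuous h) (he : ∀ x, h (-x) = h x)
    (b : ℝ) : ∫ x in -b..b, h x = 2 * ∫ x in 0..b, h x := by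
  have hneg : ∫ x in -b..0, h x = ∫ x in 0..b, h x := by
    simpa only [he, neg_zero] using (intervalIntegral.integral_comp_neg (a := 0) (b := b) h).symm
  rw [← intervalIntegral.integral_add_adjacent_intervals (hc.intervalIntegrable _ 0)
    (hc.intervalIntegrable 0 _), hneg, two_mul]

lemma setIntegral_abs_mem_Icc_of_even (hc : Continuous h) (he : ∀ x, h (-x) = h x) {a b : ℝ}
    (ha : 0 < a) (hab : a ≤ b) :
    ∫ x in {x : ℝ | a ≤ |x| ∧ |x| ≤ b}, h x = 2 * ∫ x in a..b, h x := by
  have hset : {x : ℝ | a ≤ |x| ∧ |x| ≤ b} = Set.Icc (-b) (-a) ∪ Set.Icc a b := by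
    ext x
    simp only [Set.mem_ofPred_eq, Set.mem_union, Set.mem_Icc]
    rcases le_or_gt 0 x with hx | hx
    · rw [abs_of_nonneg hx]
      constructor
      · exact Or.inr
      · rintro (⟨_, _⟩ | h) <;> first | exact h | constructor <;> linarith
    · rw [abs_of_neg hx]
      constructor
      · rintro ⟨_, _⟩; left; constructor <;> linarith
      · rintro (⟨_, _⟩ | ⟨_, _⟩) <;> constructor <;> linarith
  have hdisj : Disjoint (Set.Icc (-b) (-a)) (Set.Icc a b) :=
    Set.disjoint_left.2 fun x h₁ h₂ ↦ by linarith [h₁.2, h₂.1]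
  have hneg : ∫ x in -b..-a, h x = ∫ x in a..b, h x := by
    simpa only [he] using (intervalIntegral.integral_comp_neg (a := a) (b := b) h).symm
  rw [hset, setIntegral_union hdisj measurableSet_Icc hc.integrableOn_Icc hc.integrableOn_Icc,
    integral_Icc_eq_integral_Ioc, integral_Icc_eq_integral_Ioc,
    ← intervalIntegral.integral_of_le (neg_le_neg hab), ← intervalIntegral.integral_of_le hab,
    hneg, two_mul]

end EvenIntegrals

lemma rho2_eq_of_re_fourierT_eq {G h : ℝ → ℝ} (hG : ∀ α, (fourierT G α).re = h α)
    (hc : Continuous h) (he : ∀ x, h (-x) = h x) :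
    rho2 G = h 0 + 2 * (∫ α in 0..1, h α * α) + 2 * ∫ α in 1..2, h α := by
  have hweighted : ∫ α in (-1 : ℝ)..1, h α * |α| = 2 * ∫ α in 0..1, h α * α := by
    rw [intervalIntegral_neg_eq_two_mul_of_even (by fun_prop) (fun α ↦ by rw [he, abs_neg])]
    congr 1
    refine intervalIntegral.integral_congr fun α hα ↦ ?_
    rw [Set.uIcc_of_le zero_le_one] at hα
    simp only [abs_of_nonneg hα.1]
  simp only [rho2, hG]
  rw [hweighted, setIntegral_abs_mem_Icc_of_even hc he one_pos one_le_two]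

section RescaledTransform

variable {g : ℝ → ℝ} (hc : Continuous g) (he : ∀ x, g (-x) = g x) (hi : Integrable g)
  (hnn : ∀ α, 0 ≤ (fourierT g α).re) {s : ℝ} (hs : 0 < s)
include hc he hi hnn hs

lemma re_fourierT_re_fourierT_div (α : ℝ) :
    (fourierT (fun x ↦ (fourierT g (x / s)).re) α).re = s * g (s * α) := by
  rw [fourierT_re_fourierT_div hc he hi (integrable_re_fourierT hc he hi hnn) hs, ofReal_re]

lemma memA2_re_fourierT_div (hneg : ∀ x, 2 * s ≤ |x| → g x ≤ 0) :
    memA2 fun x ↦ (fourierT g (x / s)).re := by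
  refine ⟨(continuous_re_fourierT hi).comp (by fun_prop), fun x ↦ ?_, fun x ↦ hnn _, ?_,
    fun α hα ↦ ?_⟩
  · simp only [neg_div, fourierT_neg_of_even he]
  · simpa only [div_eq_inv_mul] using
      (integrable_re_fourierT hc he hi hnn).comp_mul_left' (inv_ne_zero hs.ne')
  · rw [re_fourierT_re_fourierT_div hc he hi hnn hs]
    refine mul_nonpos_of_nonneg_of_nonpos hs.le (hneg _ ?_)
    rw [abs_mul, abs_of_pos hs]
    nlinarith

lemma rho2_re_fourierT_div :
    rho2 (fun x ↦ (fourierT g (x / s)).re) =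
      s * g 0 + 2 / s * (∫ x in 0..s, g x * x) + 2 * ∫ x in s..2 * s, g x := by
  rw [rho2_eq_of_re_fourierT_eq (re_fourierT_re_fourierT_div hc he hi hnn hs) (by fun_prop)
    (fun α ↦ by rw [mul_neg, he])]
  have hweighted : ∫ α in 0..1, s * g (s * α) * α = s⁻¹ * ∫ x in 0..s, g x * x := by
    have := intervalIntegral.integral_comp_mul_left (fun x ↦ g x * x) hs.ne' (a := 0) (b := 1)
    rw [mul_zero, mul_one, smul_eq_mul] at this
    rw [← this]
    congr with α
    ring
  have hplain : ∫ α in 1..2, s * g (s * α) = ∫ x in s..2 * s, g x := by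
    rw [intervalIntegral.integral_const_mul, intervalIntegral.integral_comp_mul_left g hs.ne',
      mul_one, mul_comm s 2, smul_eq_mul, mul_inv_cancel_left₀ hs.ne']
  rw [mul_zero, hweighted, hplain]
  ring

end RescaledTransform

section LastSign

variable {f : ℝ → ℝ} (hr : ∃ r, ∀ x, r ≤ |x| → f x ≤ 0)
include hr

lemma nonempty_lastSign_set :
    {r : ℝ | 0 < r ∧ ∀ x, r ≤ |x| → f x ≤ 0}.Nonempty := by
  obtain ⟨r, hr⟩ := hr
  exact ⟨max r 1, by positivity, fun x hx ↦ hr x ((le_max_left r 1).trans hx)⟩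

lemma lastSign_pos (hc : ContinuousAt f 0) (h0 : 0 < f 0) : 0 < lastSign f := by
  obtain ⟨δ, hδ, hpos⟩ := Metric.eventually_nhds_iff.1 (hc.eventually (lt_mem_nhds h0))
  refine hδ.trans_le (le_csInf (nonempty_lastSign_set hr) fun s ⟨hs, hneg⟩ ↦ ?_)
  by_contra! hsδ
  have : 0 < f s := hpos (by rwa [Real.dist_0_eq_abs, abs_of_pos hs])
  linarith [hneg s (le_abs_self s)]

lemma nonpos_of_lastSign_le (hc : Continuous f) (hpos : 0 < lastSign f) {x : ℝ}
    (hx : lastSign f ≤ |x|) : f x ≤ 0 := by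
  have hx₀ : 0 < |x| := hpos.trans_le hx
  have hbeyond : ∀ t > 1, f (t * x) ≤ 0 := fun t ht ↦ by
    obtain ⟨s, ⟨_, hneg⟩, hs⟩ := exists_lt_of_csInf_lt (nonempty_lastSign_set hr)
      (hx.trans_lt (lt_mul_of_one_lt_left hx₀ ht))
    exact hneg _ (by rw [abs_mul, abs_of_pos (one_pos.trans ht)]; exact hs.le)
  have hlim : Tendsto (fun t : ℝ ↦ f (t * x)) (𝓝[>] 1) (𝓝 (f x)) := by
    simpa [Function.comp_def] using
      ((hc.comp (continuous_mul_const x)).tendsto 1).mono_left nhdsWithin_le_nhds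
  exact le_of_tendsto hlim (eventually_nhdsWithin_of_forall hbeyond)

end LastSign

lemma integral_le_intervalIntegral_of_nonpos {f : ℝ → ℝ} (hi : Integrable f) {r : ℝ}
    (hr : 0 ≤ r) (hneg : ∀ x, r ≤ |x| → f x ≤ 0) : ∫ x, f x ≤ ∫ x in -r..r, f x := by
  rw [intervalIntegral.integral_of_le (by linarith), ← integral_Icc_eq_integral_Ioc,
    ← integral_add_compl measurableSet_Icc hi, add_le_iff_nonpos_right]
  refine setIntegral_nonpos measurableSet_Icc.compl fun x hx ↦ hneg x ?_
  simp only [Set.mem_compl_iff, Set.mem_Icc, not_and_or, not_le] at hx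
  rcases hx with hx | hx
  · rw [abs_of_neg (by linarith)]; linarith
  · rw [abs_of_pos (by linarith)]; linarith

lemma two_mul_intervalIntegral_le {f : ℝ → ℝ} (hc : Continuous f) {s : ℝ} (hs : 0 < s)
    (hle : ∀ x ∈ Set.Icc 0 s, f x ≤ 1) : 2 * ∫ x in 0..s, f x ≤ s + 2 / s * ∫ x in 0..s, f x * x := by
  have hweight : ∫ x in 0..s, f x * (2 - 2 / s * x) ≤ ∫ x in 0..s, (2 - 2 / s * x) :=
    intervalIntegral.integral_mono_on hs.le (Continuous.intervalIntegrable (by fun_prop) _ _)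
      (Continuous.intervalIntegrable (by fun_prop) _ _) fun x hx ↦ by
      have : 2 / s * x ≤ 2 := by rw [div_mul_eq_mul_div, div_le_iff₀ hs]; linarith [hx.2]
      nlinarith [hle x hx]
  have hexpand : ∫ x in 0..s, f x * (2 - 2 / s * x)
      = 2 * (∫ x in 0..s, f x) - 2 / s * ∫ x in 0..s, f x * x := by
    simp_rw [mul_sub]
    rw [intervalIntegral.integral_sub (Continuous.intervalIntegrable (by fun_prop) _ _)
      (Continuous.intervalIntegrable (by fun_prop) _ _),
      ← intervalIntegral.integral_const_mul, ← intervalIntegral.integral_const_mul]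
    congr 1 <;> congr with x <;> ring
  have hlinear : ∫ x in 0..s, (2 - 2 / s * x) = s := by
    rw [intervalIntegral.integral_sub intervalIntegrable_const
      (Continuous.intervalIntegrable (by fun_prop) _ _),
      intervalIntegral.integral_const_mul, integral_id, intervalIntegral.integral_const]
    field_simp
    ring
  linarith

lemma one_le_Lfun {f : ℝ → ℝ} (hf : memALP f) : 1 ≤ Lfun f := by
  obtain ⟨hc, he, hi, h0, hF0, hnn, hr⟩ := hf
  have hpos := lastSign_pos hr hc.continuousAt (h0 ▸ one_pos)
  set r := lastSign f
  have hint : ∫ x, f x = 1 := by exact_mod_cast (fourierT_zero f).symm.trans hF0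
  have htail := integral_le_intervalIntegral_of_nonpos hi hpos.le
    fun x ↦ nonpos_of_lastSign_le hr hc hpos
  have hhead := two_mul_intervalIntegral_le hc (half_pos hpos)
    fun x _ ↦ h0 ▸ (le_abs_self _).trans (abs_le_of_re_fourierT_nonneg hc he hi hnn x)
  rw [intervalIntegral_neg_eq_two_mul_of_even hc he,
    ← intervalIntegral.integral_add_adjacent_intervals (hc.intervalIntegrable 0 (r / 2))
      (hc.intervalIntegrable _ r)] at htail
  rw [Lfun, show 4 / r = 2 / (r / 2) by field_simp; norm_num]
  linarith

-- `hρ` covers the case of a set not bounded below, whose `sInf` is `0` in Lean.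
lemma C2_le {g : ℝ → ℝ} (hg : memA2 g) (hg0 : 0 < g 0) (hρ : 0 ≤ rho2 g / g 0) :
    C2 ≤ rho2 g / g 0 := by
  unfold C2
  set S := {c : ℝ | ∃ g : ℝ → ℝ, memA2 g ∧ g ≠ 0 ∧ 0 < g 0 ∧ c = rho2 g / g 0}
  have hmem : rho2 g / g 0 ∈ S := ⟨g, hg, fun h ↦ hg0.ne' (congrFun h 0), hg0, rfl⟩
  by_cases hbdd : BddBelow S
  · exact csInf_le hbdd hmem
  · rwa [Real.sInf_of_not_bddBelow hbdd]

/-- For every `f ∈ A_LP` one has `C₂ ≤ L(f)`; indeed the function `g(x) := f̂(2x/r(f))`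
belongs to `A₂`, satisfies `g(0) = 1` and `ρ₂(g) = L(f)`. -/
theorem statement15 (f : ℝ → ℝ) (hf : memALP f) :
    C2 ≤ Lfun f ∧
    memA2 (fun x => (fourierT f (2 * x / lastSign f)).re) ∧
    (fun x => (fourierT f (2 * x / lastSign f)).re) 0 = 1 ∧
    rho2 (fun x => (fourierT f (2 * x / lastSign f)).re) = Lfun f := by
  have hL := one_le_Lfun hf
  obtain ⟨hc, he, hi, h0, hF0, hnn, hr⟩ := hf
  have hpos := lastSign_pos hr hc.continuousAt (h0 ▸ one_pos)
  have hs : 0 < lastSign f / 2 := half_pos hpos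
  have hG : (fun x => (fourierT f (2 * x / lastSign f)).re)
      = fun x ↦ (fourierT f (x / (lastSign f / 2))).re := by
    funext x
    rw [div_div_eq_mul_div, mul_comm]
  have hA2 : memA2 fun x ↦ (fourierT f (x / (lastSign f / 2))).re :=
    memA2_re_fourierT_div hc he hi hnn hs fun x hx ↦
      nonpos_of_lastSign_le hr hc hpos ((mul_div_cancel₀ _ two_ne_zero).symm.trans_le hx)
  have hG0 : (fourierT f (0 / (lastSign f / 2))).re = 1 := by simp [hF0]
  have hρ : rho2 (fun x ↦ (fourierT f (x / (lastSign f / 2))).re) = Lfun f := by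
    rw [rho2_re_fourierT_div hc he hi hnn hs, Lfun, h0, mul_div_cancel₀ _ two_ne_zero,
      show 2 / (lastSign f / 2) = 4 / lastSign f by field_simp; norm_num]
    ring
  rw [hG]
  have hC2 := C2_le hA2 (by rw [hG0]; exact one_pos) (by rw [hG0, hρ, div_one]; linarith)
  rw [hG0, hρ, div_one] at hC2
  exact ⟨hC2, hA2, hG0, hρ⟩
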